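/- Let V be a finite-dimensional real vector space and L ⊆ 𝕋_ℂV a lagrangian subspace of type 0, i.e. E := pr_{V_ℂ}(L) satisfies E = Ē. Set Δ := E ∩ V, so E = Δ_ℂ. Let ε ∈ Λ²E* be the unique form with L = L(E,ε), and write B₀ := Re(ε|_{Δ×Δ}) and ω := Im(ε|_{Δ×Δ}), both in Λ²Δ*. Then for every real B ∈ Λ²V* with B|_{Δ×Δ} = B₀ (such an extension exists), one has L = e^B(L(Δ_ℂ, i·ω̃)), where ω̃ is the ℂ-bilinear extension of ω to Δ_ℂ and L(Δ_ℂ, i·ω̃) := {X + ξ ∈ 𝕋_ℂV : X ∈ Δ_ℂ, ξ(Y) = i·ω̃(X,Y) for all Y ∈ Δ_ℂ}. -/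

import Mathlib

/-!
Since `E = Ē`, the real and imaginary parts `(x + x̄)/2` and `(x - x̄)/2i` of every `x ∈ E`
lie in `Δ = E ∩ V`, so `E = Δ_ℂ`. On `Δ × Δ` we have `ε = B + iω`, and a ℂ-bilinear form on
`Δ_ℂ` is determined by its values on `Δ × Δ`; hence `ε = B̃ + iω̃` on `Δ_ℂ`, and subtracting
`B̃` from the covector part, i.e. applying `e^{-B}`, turns `L(E, ε)` into `L(Δ_ℂ, iω̃)`.
An alternating extension of `B₀` is `B₀` composed with a projection onto `Δ`.
-/

open TensorProduct Module

noncomputable section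

namespace CDirac


/-- The real generalized tangent space `V ⊕ V*`. -/
abbrev TR (V : Type*) [AddCommGroup V] [Module ℝ V] := V × (V →ₗ[ℝ] ℝ)

variable {V : Type*} [AddCommGroup V] [Module ℝ V]

/-- The canonical pairing `⟨X+ξ, Y+η⟩ = (η X + ξ Y)/2` on `𝕋V`. -/
def pairR (a b : TR V) : ℝ := (b.2 a.1 + a.2 b.1) / 2

lemma pairR_add_left (a a' b : TR V) : pairR (a + a') b = pairR a b + pairR a' b := by
  simp only [pairR, Prod.fst_add, Prod.snd_add, map_add, LinearMap.add_apply]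
  ring

lemma pairR_smul_left (c : ℝ) (a b : TR V) : pairR (c • a) b = c * pairR a b := by
  simp only [pairR, Prod.smul_fst, Prod.smul_snd, map_smul, LinearMap.smul_apply,
    smul_eq_mul]
  ring

/-- Orthogonal complement with respect to the pairing on `𝕋V`. -/
def orthR (L : Submodule ℝ (TR V)) : Submodule ℝ (TR V) where
  carrier := {a | ∀ b ∈ L, pairR a b = 0}
  zero_mem' := fun b _ => by simp [pairR]
  add_mem' := fun {a a'} ha ha' b hb => by
    rw [pairR_add_left, ha b hb, ha' b hb, add_zero]
  smul_mem' := fun c a ha b hb => by rw [pairR_smul_left, ha b hb, mul_zero]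

/-- A real lagrangian subspace: `L = L^⊥`. -/
def IsLagrangianR (L : Submodule ℝ (TR V)) : Prop := L = orthR L

/-- An isotropic subspace of `𝕋V`. -/
def IsIsotropicR (K : Submodule ℝ (TR V)) : Prop := ∀ a ∈ K, ∀ b ∈ K, pairR a b = 0

/-- The quotient `K^⊥/K`. -/
abbrev quotK (K : Submodule ℝ (TR V)) :=
  @HasQuotient.Quotient _ _
    (@Submodule.hasQuotient ℝ ↥(orthR K) _ (orthR K).addCommGroup (orthR K).module)
    (K.comap (orthR K).subtype)

/-- The quotient map `K^⊥ → K^⊥/K`. -/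
def mkK (K : Submodule ℝ (TR V)) : ↥(orthR K) →ₗ[ℝ] quotK K :=
  @Submodule.mkQ ℝ _ _ (orthR K).addCommGroup (orthR K).module (K.comap (orthR K).subtype)




/-- The complexification `V_ℂ = ℂ ⊗_ℝ V`. -/
abbrev Cx (V : Type*) [AddCommGroup V] [Module ℝ V] := ℂ ⊗[ℝ] V

/-- The complex dual `(V_ℂ)^*`. -/
abbrev DualC (V : Type*) [AddCommGroup V] [Module ℝ V] := Cx V →ₗ[ℂ] ℂ

/-- The complexified generalized tangent space `𝕋_ℂ V = V_ℂ ⊕ (V_ℂ)^*`. -/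
abbrev TCx (V : Type*) [AddCommGroup V] [Module ℝ V] := Cx V × DualC V

/-- The ℂ-bilinear pairing on `𝕋_ℂ V`. -/
def pairC (a b : TCx V) : ℂ := (b.2 a.1 + a.2 b.1) / 2

lemma pairC_add_left (a a' b : TCx V) : pairC (a + a') b = pairC a b + pairC a' b := by
  simp only [pairC, Prod.fst_add, Prod.snd_add, map_add, LinearMap.add_apply]
  ring

lemma pairC_smul_left (c : ℂ) (a b : TCx V) : pairC (c • a) b = c * pairC a b := by
  simp only [pairC, Prod.smul_fst, Prod.smul_snd, map_smul, LinearMap.smul_apply,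
    smul_eq_mul]
  ring

/-- Orthogonal complement with respect to the ℂ-bilinear pairing on `𝕋_ℂ V`. -/
def orthC (L : Submodule ℂ (TCx V)) : Submodule ℂ (TCx V) where
  carrier := {a | ∀ b ∈ L, pairC a b = 0}
  zero_mem' := fun b _ => by simp [pairC]
  add_mem' := fun {a a'} ha ha' b hb => by
    rw [pairC_add_left, ha b hb, ha' b hb, add_zero]
  smul_mem' := fun c a ha b hb => by rw [pairC_smul_left, ha b hb, mul_zero]

/-- A complex lagrangian subspace: `L = L^⊥`. -/
def IsLagrangianC (L : Submodule ℂ (TCx V)) : Prop := L = orthC L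

private lemma conjCxAux_smul (z : ℂ) (x : Cx V) :
    TensorProduct.map Complex.conjAe.toLinearMap LinearMap.id (z • x) =
      starRingEnd ℂ z • TensorProduct.map Complex.conjAe.toLinearMap LinearMap.id x := by
  induction x using TensorProduct.induction_on with
  | zero => simp
  | tmul w v => simp [smul_tmul', smul_eq_mul, Complex.conjAe_coe, map_mul]
  | add x y hx hy => simp only [smul_add, map_add, hx, hy]

/-- Conjugation on `V_ℂ`, as a `conj`-semilinear map. -/
def conjCx : Cx V →ₛₗ[starRingEnd ℂ] Cx V where
  toFun := TensorProduct.map Complex.conjAe.toLinearMap LinearMap.id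
  map_add' := map_add _
  map_smul' := conjCxAux_smul

lemma conjCx_smul (z : ℂ) (x : Cx V) :
    conjCx (z • x) = starRingEnd ℂ z • conjCx x := conjCxAux_smul z x

/-- Conjugation of a complex linear functional. -/
def conjDualFun (ξ : DualC V) : DualC V where
  toFun x := starRingEnd ℂ (ξ (conjCx x))
  map_add' x y := by simp
  map_smul' z x := by
    try dsimp only
    rw [conjCx_smul, map_smul, smul_eq_mul, map_mul, RingHom.id_apply]
    simp [smul_eq_mul]

/-- Conjugation on `(V_ℂ)^*`, as a `conj`-semilinear map. -/
def conjDual : DualC V →ₛₗ[starRingEnd ℂ] DualC V where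
  toFun := conjDualFun
  map_add' ξ η := by ext x; simp [conjDualFun]
  map_smul' z ξ := by
    ext x
    simp [conjDualFun, smul_eq_mul, map_mul]

/-- Conjugation on `𝕋_ℂ V`, as a `conj`-semilinear map. -/
def conjT : TCx V →ₛₗ[starRingEnd ℂ] TCx V where
  toFun a := (conjCx a.1, conjDual a.2)
  map_add' a b := by simp [Prod.ext_iff]
  map_smul' z a := by
    simp [Prod.ext_iff, Prod.smul_fst, Prod.smul_snd, map_smulₛₗ]

instance : RingHomSurjective (starRingEnd ℂ) :=
  ⟨fun z => ⟨starRingEnd ℂ z, by simp⟩⟩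

/-- The conjugate `L̄` of a ℂ-subspace of `𝕋_ℂ V`. -/
def conjSub (L : Submodule ℂ (TCx V)) : Submodule ℂ (TCx V) := L.map conjT

/-- The conjugate `Ē` of a ℂ-subspace of `V_ℂ`. -/
def conjE (E : Submodule ℂ (Cx V)) : Submodule ℂ (Cx V) := E.map conjCx

/-- The canonical inclusion `V → V_ℂ`, `v ↦ 1 ⊗ v`. -/
def iV : V →ₗ[ℝ] Cx V := TensorProduct.mk ℝ ℂ V 1





/-- ℝ-linear auxiliary version of the ℂ-linear extension of a real functional. -/
def dualExtAux (α : V →ₗ[ℝ] ℝ) : Cx V →ₗ[ℝ] ℂ :=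
  TensorProduct.lift
    (LinearMap.mk₂ ℝ (fun z v => z * (α v : ℂ))
      (fun z w v => by push_cast; ring)
      (fun r z v => by simp only [Complex.real_smul]; ring)
      (fun z v w => by push_cast [map_add]; ring)
      (fun r z v => by simp only [map_smul, smul_eq_mul, Complex.real_smul]; push_cast; ring))

private lemma dualExtAux_smulC (α : V →ₗ[ℝ] ℝ) (z : ℂ) (x : Cx V) :
    dualExtAux α (z • x) = z * dualExtAux α x := by
  induction x using TensorProduct.induction_on with
  | zero => simp
  | tmul w v =>
      simp only [dualExtAux, smul_tmul', lift.tmul, LinearMap.mk₂_apply, smul_eq_mul]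
      ring
  | add x y hx hy => simp only [smul_add, map_add, hx, hy]; ring

/-- The ℂ-linear extension of a real functional `α : V → ℝ` to `V_ℂ`. -/
def dualExtFun (α : V →ₗ[ℝ] ℝ) : DualC V where
  toFun := dualExtAux α
  map_add' := map_add _
  map_smul' z x := by simpa using dualExtAux_smulC α z x

private lemma dualExtFun_tmul (α : V →ₗ[ℝ] ℝ) (z : ℂ) (v : V) :
    dualExtFun α (z ⊗ₜ[ℝ] v) = z * (α v : ℂ) := by
  simp [dualExtFun, dualExtAux]

/-- The ℂ-linear extension map `V^* → (V_ℂ)^*`, as an ℝ-linear map. -/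
def dualExt : (V →ₗ[ℝ] ℝ) →ₗ[ℝ] DualC V where
  toFun := dualExtFun
  map_add' α β := by
    apply LinearMap.ext; intro x
    induction x using TensorProduct.induction_on with
    | zero => simp
    | tmul w v =>
        simp only [dualExtFun_tmul, LinearMap.add_apply]
        push_cast
        ring
    | add x y hx hy =>
        simp only [map_add, LinearMap.add_apply] at *
        rw [hx, hy]
  map_smul' r α := by
    apply LinearMap.ext; intro x
    induction x using TensorProduct.induction_on with
    | zero => simp
    | tmul w v =>
        simp only [dualExtFun_tmul, RingHom.id_apply, LinearMap.smul_apply,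
          LinearMap.smul_apply, smul_eq_mul, Complex.real_smul]
        push_cast
        ring
    | add x y hx hy =>
        simp only [map_add, RingHom.id_apply, LinearMap.smul_apply, smul_eq_mul] at *
        rw [hx, hy]

/-- The canonical inclusion `𝕋V → 𝕋_ℂV`. -/
def iT : TR V →ₗ[ℝ] TCx V where
  toFun a := (iV a.1, dualExt a.2)
  map_add' a b := by simp [Prod.ext_iff]
  map_smul' r a := by simp [Prod.ext_iff]



/-- Auxiliary ℝ-linear version of the ℂ-bilinear extension of a real bilinear form. -/
def bilinExtAux (B : V →ₗ[ℝ] V →ₗ[ℝ] ℝ) : Cx V →ₗ[ℝ] DualC V :=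
  TensorProduct.lift
    (LinearMap.mk₂ ℝ (fun z v => z • dualExt (B v))
      (fun z w v => by simp only [add_smul])
      (fun r z v => by simp only [smul_assoc])
      (fun z v w => by simp only [map_add, smul_add])
      (fun r z v => by simp only [map_smul]; exact smul_comm z r _))

private lemma bilinExtAux_smulC (B : V →ₗ[ℝ] V →ₗ[ℝ] ℝ) (z : ℂ) (x : Cx V) :
    bilinExtAux B (z • x) = z • bilinExtAux B x := by
  induction x using TensorProduct.induction_on with
  | zero => simp
  | tmul w v =>
      simp only [bilinExtAux, smul_tmul', lift.tmul, LinearMap.mk₂_apply, smul_eq_mul,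
        mul_smul]
  | add x y hx hy => simp only [smul_add, map_add, hx, hy]

/-- The ℂ-bilinear extension of a real bilinear form `B : V × V → ℝ` to `V_ℂ`. -/
def bilinExt (B : V →ₗ[ℝ] V →ₗ[ℝ] ℝ) : Cx V →ₗ[ℂ] DualC V where
  toFun := bilinExtAux B
  map_add' := map_add _
  map_smul' z x := by simpa using bilinExtAux_smulC B z x

/-- The `B`-transformation `e^B(X+ξ) = X + ξ + B̃(X,·)` of `𝕋_ℂV`, for a real `B`. -/
def eB (B : V →ₗ[ℝ] V →ₗ[ℝ] ℝ) : TCx V →ₗ[ℂ] TCx V where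
  toFun a := (a.1, a.2 + bilinExt B a.1)
  map_add' a b := by
    simp only [Prod.fst_add, Prod.snd_add, map_add, Prod.mk_add_mk, Prod.mk.injEq]
    exact ⟨trivial, by abel⟩
  map_smul' z a := by
    simp only [Prod.smul_fst, Prod.smul_snd, map_smul, RingHom.id_apply, Prod.smul_mk,
      Prod.mk.injEq, smul_add]

/-- The real `B`-transformation `e^B(X+α) = X + α + B(X,·)` of `𝕋V`. -/
def eBR (B : V →ₗ[ℝ] V →ₗ[ℝ] ℝ) : TR V →ₗ[ℝ] TR V where
  toFun a := (a.1, a.2 + B a.1)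
  map_add' a b := by
    simp only [Prod.fst_add, Prod.snd_add, map_add, Prod.mk_add_mk, Prod.mk.injEq]
    exact ⟨trivial, by abel⟩
  map_smul' r a := by
    simp only [Prod.smul_fst, Prod.smul_snd, map_smul, RingHom.id_apply, Prod.smul_mk,
      Prod.mk.injEq, smul_add]


/-- The range `E = pr_{V_ℂ}(L)` of a subspace of `𝕋_ℂV`. -/
def Esub (L : Submodule ℂ (TCx V)) : Submodule ℂ (Cx V) :=
  L.map (LinearMap.fst ℂ (Cx V) (DualC V))

/-- The real index `r = dim_ℂ (L ∩ L̄)`. -/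
def riL (L : Submodule ℂ (TCx V)) : ℕ := finrank ℂ ↥(L ⊓ conjSub L)

/-- The real part `K = (L ∩ L̄) ∩ 𝕋V`, as a subspace of `𝕋V`. -/
def Ksub (L : Submodule ℂ (TCx V)) : Submodule ℝ (TR V) :=
  ((L ⊓ conjSub L).restrictScalars ℝ).comap iT

/-- The distribution `D = (E + Ē) ∩ V`, as a subspace of `V`. -/
def Dsub (L : Submodule ℂ (TCx V)) : Submodule ℝ V :=
  ((Esub L ⊔ conjE (Esub L)).restrictScalars ℝ).comap iV

/-- The distribution `Δ = (E ∩ Ē) ∩ V`, as a subspace of `V`. -/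
def DeltaSub (L : Submodule ℂ (TCx V)) : Submodule ℝ V :=
  ((Esub L ⊓ conjE (Esub L)).restrictScalars ℝ).comap iV

/-- The order `s = dim V - dim D`. -/
def orderL (L : Submodule ℂ (TCx V)) : ℕ := finrank ℝ V - finrank ℝ ↥(Dsub L)

/-- The (normalized) type `k = dim_ℂ(E + Ē) - dim_ℂ E`. -/
def typeL (L : Submodule ℂ (TCx V)) : ℕ :=
  finrank ℂ ↥(Esub L ⊔ conjE (Esub L)) - finrank ℂ ↥(Esub L)

lemma iV_apply (v : V) : iV v = (1 : ℂ) ⊗ₜ[ℝ] v := rfl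

lemma conjCx_tmul (z : ℂ) (v : V) : conjCx (z ⊗ₜ[ℝ] v) = starRingEnd ℂ z ⊗ₜ[ℝ] v := by
  simp [conjCx, Complex.conjAe_coe]

def reC : Cx V →ₗ[ℝ] V := TensorProduct.lid ℝ V ∘ₗ TensorProduct.map Complex.reLm LinearMap.id

def imC : Cx V →ₗ[ℝ] V := TensorProduct.lid ℝ V ∘ₗ TensorProduct.map Complex.imLm LinearMap.id

lemma iV_reC_add_I_smul_iV_imC (x : Cx V) : iV (reC x) + Complex.I • iV (imC x) = x := by
  induction x using TensorProduct.induction_on with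
  | zero => simp
  | tmul z v =>
    simp only [reC, imC, iV_apply, LinearMap.coe_comp, Function.comp_apply, map_tmul,
      LinearEquiv.coe_coe, lid_tmul, Complex.reLm_coe, Complex.imLm_coe, LinearMap.id_coe, id,
      ← smul_tmul, smul_tmul', Complex.real_smul, mul_one, ← add_tmul, smul_eq_mul]
    rw [mul_comm, Complex.re_add_im]
  | add x y hx hy =>
    simp only [map_add, smul_add]
    conv_rhs => rw [← hx, ← hy]
    abel

lemma iV_reC_sub_I_smul_iV_imC (x : Cx V) : iV (reC x) - Complex.I • iV (imC x) = conjCx x := by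
  induction x using TensorProduct.induction_on with
  | zero => simp
  | tmul z v =>
    simp only [reC, imC, iV_apply, LinearMap.coe_comp, Function.comp_apply, map_tmul,
      LinearEquiv.coe_coe, lid_tmul, Complex.reLm_coe, Complex.imLm_coe, LinearMap.id_coe, id,
      ← smul_tmul, smul_tmul', Complex.real_smul, mul_one, ← sub_tmul, smul_eq_mul, conjCx_tmul]
    congr 1
    apply Complex.ext <;> simp
  | add x y hx hy =>
    simp only [map_add, smul_add, ← hx, ← hy]
    abel

section ConjStable

variable {E : Submodule ℂ (Cx V)} (hE : conjE E = E)
include hE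

lemma conjCx_mem {x : Cx V} (hx : x ∈ E) : conjCx x ∈ E :=
  hE ▸ Submodule.mem_map_of_mem hx

lemma iV_reC_mem {x : Cx V} (hx : x ∈ E) : iV (reC x) ∈ E := by
  have h : iV (reC x) = (2⁻¹ : ℂ) • (x + conjCx x) := by
    nth_rw 2 [← iV_reC_add_I_smul_iV_imC x]
    rw [← iV_reC_sub_I_smul_iV_imC x]
    module
  rw [h]
  exact E.smul_mem _ (E.add_mem hx (conjCx_mem hE hx))

lemma iV_imC_mem {x : Cx V} (hx : x ∈ E) : iV (imC x) ∈ E := by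
  have h : iV (imC x) = (-Complex.I / 2) • (x - conjCx x) := by
    nth_rw 2 [← iV_reC_add_I_smul_iV_imC x]
    rw [← iV_reC_sub_I_smul_iV_imC x]
    match_scalars <;> ring_nf
    simp
  rw [h]
  exact E.smul_mem _ (E.sub_mem hx (conjCx_mem hE hx))

lemma span_iV_comap_eq_of_conjE_eq :
    Submodule.span ℂ (iV '' ((E.restrictScalars ℝ).comap iV : Set V)) = E := by
  refine le_antisymm (Submodule.span_le.2 (Set.image_preimage_subset _ _)) fun x hx => ?_
  rw [← iV_reC_add_I_smul_iV_imC x]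
  exact add_mem (Submodule.subset_span ⟨_, iV_reC_mem hE hx, rfl⟩)
    (Submodule.smul_mem _ _ (Submodule.subset_span ⟨_, iV_imC_mem hE hx, rfl⟩))

end ConjStable

lemma range_baseChange_subtype (Δ : Submodule ℝ V) :
    LinearMap.range (Δ.subtype.baseChange ℂ) = Submodule.span ℂ (iV '' (Δ : Set V)) := by
  rw [← Submodule.baseChange, Submodule.baseChange_eq_span, Submodule.map_coe]
  rfl

lemma ext₂_iV {W : Type*} [AddCommGroup W] [Module ℝ W] {c c' : Cx W →ₗ[ℂ] Cx W →ₗ[ℂ] ℂ}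
    (h : ∀ v w, c (iV v) (iV w) = c' (iV v) (iV w)) : c = c' := by
  ext v w
  exact h v w

lemma bilinExt_iV_iV (B : V →ₗ[ℝ] V →ₗ[ℝ] ℝ) (v w : V) :
    bilinExt B (iV v) (iV w) = B v w := by
  change bilinExtAux B (1 ⊗ₜ v) (1 ⊗ₜ w) = B v w
  simp [bilinExtAux, dualExt, dualExtFun_tmul]

lemma eq_bilinExt_add_I_mul_bilinExt {E : Submodule ℂ (Cx V)} {Δ : Submodule ℝ V}
    (hΔ : ∀ x ∈ Δ, iV x ∈ E) (ε : E →ₗ[ℂ] E →ₗ[ℂ] ℂ) (B : V →ₗ[ℝ] V →ₗ[ℝ] ℝ)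
    (ω : Δ →ₗ[ℝ] Δ →ₗ[ℝ] ℝ)
    (hB : ∀ (x y : Δ) (hx : iV (x : V) ∈ E) (hy : iV (y : V) ∈ E),
      B x y = (ε ⟨iV (x : V), hx⟩ ⟨iV (y : V), hy⟩).re)
    (hω : ∀ (x y : Δ) (hx : iV (x : V) ∈ E) (hy : iV (y : V) ∈ E),
      ω x y = (ε ⟨iV (x : V), hx⟩ ⟨iV (y : V), hy⟩).im)
    (X Y : Cx Δ) (hX : Δ.subtype.baseChange ℂ X ∈ E) (hY : Δ.subtype.baseChange ℂ Y ∈ E) :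
    ε ⟨_, hX⟩ ⟨_, hY⟩ = bilinExt B (Δ.subtype.baseChange ℂ X) (Δ.subtype.baseChange ℂ Y) +
      Complex.I * bilinExt ω X Y := by
  set j := Δ.subtype.baseChange ℂ
  have hj : ∀ X, j X ∈ E := by
    refine fun X => (?_ : LinearMap.range j ≤ E) (LinearMap.mem_range_self j X)
    rw [range_baseChange_subtype]
    exact Submodule.span_le.2 (Set.image_subset_iff.2 hΔ)
  let jE := j.codRestrict E hj
  have h : ε.compl₁₂ jE jE = (bilinExt B).compl₁₂ j j + Complex.I • bilinExt ω :=
    ext₂_iV fun x y => by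
      change ε ⟨iV (x : V), hΔ x x.2⟩ ⟨iV (y : V), hΔ y y.2⟩ =
        bilinExt B (iV (x : V)) (iV (y : V)) + Complex.I * bilinExt ω (iV x) (iV y)
      rw [bilinExt_iV_iV, bilinExt_iV_iV, hB x y (hΔ x x.2) (hΔ y y.2),
        hω x y (hΔ x x.2) (hΔ y y.2), mul_comm, Complex.re_add_im]
  exact LinearMap.congr_fun₂ h X Y

lemma mem_eB_image_iff (B : V →ₗ[ℝ] V →ₗ[ℝ] ℝ) (S : Set (TCx V)) (a : TCx V) :
    a ∈ eB B '' S ↔ (a.1, a.2 - bilinExt B a.1) ∈ S := by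
  constructor
  · rintro ⟨b, hb, rfl⟩
    simpa [eB] using hb
  · exact fun h => ⟨_, h, by simp [eB]⟩

/-- `L(E, ε) = e^B L(E, ε - B̃)`, with `E` parametrised as the range of `j`. -/
lemma coe_eq_eB_image {W : Type*} [AddCommGroup W] [Module ℂ W] {L : Submodule ℂ (TCx V)}
    {E : Submodule ℂ (Cx V)} {ε : E →ₗ[ℂ] E →ₗ[ℂ] ℂ}
    (hchar : ∀ a : TCx V, a ∈ L ↔ ∃ h : a.1 ∈ E, ∀ y : E, a.2 y = ε ⟨a.1, h⟩ y)
    {j : W →ₗ[ℂ] Cx V} (hj : LinearMap.range j = E) (B : V →ₗ[ℝ] V →ₗ[ℝ] ℝ) (c : W → W → ℂ)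
    (hsplit : ∀ X Y (hX : j X ∈ E) (hY : j Y ∈ E),
      ε ⟨j X, hX⟩ ⟨j Y, hY⟩ = bilinExt B (j X) (j Y) + c X Y) :
    (L : Set (TCx V)) = eB B '' {a | ∃ X, j X = a.1 ∧ ∀ Y, a.2 (j Y) = c X Y} := by
  have hjE : ∀ X, j X ∈ E := fun X => hj ▸ LinearMap.mem_range_self j X
  ext ⟨x, ξ⟩
  rw [SetLike.mem_coe, hchar, mem_eB_image_iff]
  constructor
  · rintro ⟨hx, hξ⟩
    obtain ⟨X, rfl⟩ : x ∈ LinearMap.range j := hj ▸ hx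
    refine ⟨X, rfl, fun Y => ?_⟩
    rw [LinearMap.sub_apply, hξ ⟨j Y, hjE Y⟩, hsplit]
    ring
  · rintro ⟨X, rfl, hX⟩
    refine ⟨hjE X, fun ⟨y, hy⟩ => ?_⟩
    obtain ⟨Y, rfl⟩ : y ∈ LinearMap.range j := hj ▸ hy
    rw [hsplit, ← hX Y, LinearMap.sub_apply]
    ring

lemma exists_alternating_extension {K U : Type*} [Field K] [AddCommGroup U] [Module K U]
    (Δ : Submodule K U) (B₀ : Δ →ₗ[K] Δ →ₗ[K] K) (hB₀ : ∀ x, B₀ x x = 0) :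
    ∃ B : U →ₗ[K] U →ₗ[K] K, (∀ v, B v v = 0) ∧ ∀ x y : Δ, B x y = B₀ x y := by
  obtain ⟨q, hq⟩ := Δ.exists_isCompl
  let π := Δ.projectionOnto q hq
  exact ⟨B₀.compl₁₂ π π, fun v => hB₀ (π v), fun x y => by
    simp only [LinearMap.compl₁₂_apply, π, Submodule.projectionOnto_apply_left]⟩

end CDirac


open CDirac Module

theorem stmt16_general (V : Type*) [AddCommGroup V] [Module ℝ V]
    (L : Submodule ℂ (TCx V)) (E : Submodule ℂ (Cx V))
    (htype0 : conjE E = E)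
    (ε : ↥E →ₗ[ℂ] ↥E →ₗ[ℂ] ℂ) (halt : ∀ x : ↥E, ε x x = 0)
    (hchar : ∀ a : TCx V, a ∈ L ↔ ∃ h : a.1 ∈ E, ∀ y : ↥E, a.2 ↑y = ε ⟨a.1, h⟩ y)
    (Δ : Submodule ℝ V) (hΔ : Δ = (E.restrictScalars ℝ).comap iV)
    (ω : ↥Δ →ₗ[ℝ] ↥Δ →ₗ[ℝ] ℝ)
    (hω : ∀ (x y : ↥Δ) (hx : iV (x : V) ∈ E) (hy : iV (y : V) ∈ E),
      ω x y = (ε ⟨iV (x : V), hx⟩ ⟨iV (y : V), hy⟩).im) :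
    -- `E = Δ_ℂ`
    E = Submodule.span ℂ (iV '' (Δ : Set V)) ∧
    -- an alternating extension `B` of `B₀ = Re ε|_{Δ×Δ}` exists ...
    (∃ B : V →ₗ[ℝ] V →ₗ[ℝ] ℝ, (∀ v : V, B v v = 0) ∧
      ∀ (x y : ↥Δ) (hx : iV (x : V) ∈ E) (hy : iV (y : V) ∈ E),
        B (x : V) (y : V) = (ε ⟨iV (x : V), hx⟩ ⟨iV (y : V), hy⟩).re) ∧
    -- ... and for every such `B`, `L = e^B (L(Δ_ℂ, i·ω̃))`
    ∀ B : V →ₗ[ℝ] V →ₗ[ℝ] ℝ, (∀ v : V, B v v = 0) →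
      (∀ (x y : ↥Δ) (hx : iV (x : V) ∈ E) (hy : iV (y : V) ∈ E),
        B (x : V) (y : V) = (ε ⟨iV (x : V), hx⟩ ⟨iV (y : V), hy⟩).re) →
      (L : Set (TCx V)) = (eB B) ''
        {a : TCx V | ∃ X' : Cx ↥Δ, (LinearMap.baseChange ℂ Δ.subtype) X' = a.1 ∧
          ∀ Y' : Cx ↥Δ, a.2 ((LinearMap.baseChange ℂ Δ.subtype) Y') =
            Complex.I * bilinExt ω X' Y'} := by
  subst hΔ
  have hspan := span_iV_comap_eq_of_conjE_eq htype0
  refine ⟨hspan.symm, ?_, fun B _ hB => ?_⟩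
  · let ι := iV.submoduleComap (E.restrictScalars ℝ)
    obtain ⟨B, hBalt, hB⟩ := exists_alternating_extension _
      (((ε.restrictScalars₁₂ ℝ ℝ).compl₁₂ ι ι).compr₂ Complex.reLm) fun x =>
        congrArg Complex.re (halt (ι x))
    exact ⟨B, hBalt, fun x y _ _ => hB x y⟩
  · exact coe_eq_eB_image hchar ((range_baseChange_subtype _).trans hspan) B _
      (eq_bilinExt_add_I_mul_bilinExt (fun _ hx => hx) ε B ω hB hω)

/-- A lagrangian `L ⊆ 𝕋_ℂV` of type `0` (i.e. `E = Ē`) satisfies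
`E = Δ_ℂ`, and for every real alternating extension `B` of `Re ε|_{Δ×Δ}` (which exists)
one has `L = e^B(L(Δ_ℂ, i·ω̃))`, where `ω = Im ε|_{Δ×Δ}`. -/
theorem stmt16 (V : Type*) [AddCommGroup V] [Module ℝ V] [FiniteDimensional ℝ V]
    (L : Submodule ℂ (TCx V)) (hL : IsLagrangianC L)
    (E : Submodule ℂ (Cx V)) (hE : E = Esub L)
    (htype0 : conjE E = E)
    (ε : ↥E →ₗ[ℂ] ↥E →ₗ[ℂ] ℂ) (halt : ∀ x : ↥E, ε x x = 0)
    (hchar : ∀ a : TCx V, a ∈ L ↔ ∃ h : a.1 ∈ E, ∀ y : ↥E, a.2 ↑y = ε ⟨a.1, h⟩ y)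
    (Δ : Submodule ℝ V) (hΔ : Δ = (E.restrictScalars ℝ).comap iV)
    (ω : ↥Δ →ₗ[ℝ] ↥Δ →ₗ[ℝ] ℝ)
    (hω : ∀ (x y : ↥Δ) (hx : iV (x : V) ∈ E) (hy : iV (y : V) ∈ E),
      ω x y = (ε ⟨iV (x : V), hx⟩ ⟨iV (y : V), hy⟩).im) :
    -- `E = Δ_ℂ`
    E = Submodule.span ℂ (iV '' (Δ : Set V)) ∧
    -- an alternating extension `B` of `B₀ = Re ε|_{Δ×Δ}` exists ...
    (∃ B : V →ₗ[ℝ] V →ₗ[ℝ] ℝ, (∀ v : V, B v v = 0) ∧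
      ∀ (x y : ↥Δ) (hx : iV (x : V) ∈ E) (hy : iV (y : V) ∈ E),
        B (x : V) (y : V) = (ε ⟨iV (x : V), hx⟩ ⟨iV (y : V), hy⟩).re) ∧
    -- ... and for every such `B`, `L = e^B (L(Δ_ℂ, i·ω̃))`
    ∀ B : V →ₗ[ℝ] V →ₗ[ℝ] ℝ, (∀ v : V, B v v = 0) →
      (∀ (x y : ↥Δ) (hx : iV (x : V) ∈ E) (hy : iV (y : V) ∈ E),
        B (x : V) (y : V) = (ε ⟨iV (x : V), hx⟩ ⟨iV (y : V), hy⟩).re) →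
      (L : Set (TCx V)) = (eB B) ''
        {a : TCx V | ∃ X' : Cx ↥Δ, (LinearMap.baseChange ℂ Δ.subtype) X' = a.1 ∧
          ∀ Y' : Cx ↥Δ, a.2 ((LinearMap.baseChange ℂ Δ.subtype) Y') =
            Complex.I * bilinExt ω X' Y'} :=
  stmt16_general V L E htype0 ε halt hchar Δ hΔ ω hω
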